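/- Let X₁ be the disjoint union of a single vertex and the path P₃ on three vertices, and let X₂ be the disjoint union of two copies of the single-edge graph P₂. Then for every finite simple graph G, the number of homomorphisms from G to X₁ is greater than or equal to the number of homomorphisms from G to X₂. -/

import Mathlib

open SimpleGraph

/-- The disjoint union of two simple graphs. -/
def disjUnion {α β : Type*} (G : SimpleGraph α) (H : SimpleGraph β) : SimpleGraph (α ⊕ β) :=
  SimpleGraph.fromRel fun x y =>
    (∃ a b, G.Adj a b ∧ x = Sum.inl a ∧ y = Sum.inl b) ∨
    (∃ a b, H.Adj a b ∧ x = Sum.inr a ∧ y = Sum.inr b)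

/-- `X₁`: the disjoint union of a single vertex and the path `P₃` on three vertices. -/
def X₁ : SimpleGraph (Fin 1 ⊕ Fin 3) := disjUnion (⊥ : SimpleGraph (Fin 1)) (pathGraph 3)

/-- `X₂`: the disjoint union of two copies of the single-edge graph `P₂`. -/
def X₂ : SimpleGraph (Fin 2 ⊕ Fin 2) := disjUnion (pathGraph 2) (pathGraph 2)

instance {n : ℕ} : DecidableRel (pathGraph n).Adj := fun u v =>
  decidable_of_iff _ (pathGraph_adj (u := u) (v := v)).symm

instance : DecidableRel X₁.Adj := fun x y => by
  unfold X₁ disjUnion; rw [SimpleGraph.fromRel_adj]; infer_instance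

instance : DecidableRel X₂.Adj := fun x y => by
  unfold X₂ disjUnion; rw [SimpleGraph.fromRel_adj]; infer_instance

def fmap : Fin 2 ⊕ Fin 2 → Fin 1 ⊕ Fin 3 :=
  Sum.elim ![Sum.inr 0, Sum.inr 1] ![Sum.inr 2, Sum.inr 1]

def gmap : Fin 2 ⊕ Fin 2 → Fin 1 ⊕ Fin 3 :=
  Sum.elim ![Sum.inr 0, Sum.inr 1] ![Sum.inr 2, Sum.inl 0]

lemma fmap_hom : ∀ x y, X₂.Adj x y → X₁.Adj (fmap x) (fmap y) := by decide

lemma gmap_inj : Function.Injective gmap := by decide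

lemma fmap_cases : ∀ x y : Fin 2 ⊕ Fin 2, fmap x = fmap y →
    x = y ∨ (x = .inl 1 ∧ y = .inr 1) ∨ (x = .inr 1 ∧ y = .inl 1) := by decide

lemma adj_inl1 : ∀ y, X₂.Adj (.inl 1) y → y = .inl 0 := by decide
lemma adj_inr1 : ∀ y, X₂.Adj (.inr 1) y → y = .inr 0 := by decide

open scoped Classical in
noncomputable def Fm {k : ℕ} (G : SimpleGraph (Fin k)) (φ : G →g X₂) : G →g X₁ where
  toFun v := if ∃ w, G.Adj v w then fmap (φ v) else gmap (φ v)
  map_rel' := by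
    intro v w hvw
    have h1 : ∃ u, G.Adj v u := ⟨w, hvw⟩
    have h2 : ∃ u, G.Adj w u := ⟨v, hvw.symm⟩
    rw [if_pos h1, if_pos h2]
    exact fmap_hom _ _ (φ.map_rel hvw)

open scoped Classical in
lemma Fm_apply {k : ℕ} (G : SimpleGraph (Fin k)) (φ : G →g X₂) (v : Fin k) :
    Fm G φ v = if ∃ w, G.Adj v w then fmap (φ v) else gmap (φ v) := rfl

/-- For every finite simple graph `G`, `hom(G, X₁) ≥ hom(G, X₂)`. -/
theorem hom_into_X1_ge_hom_into_X2 {k : ℕ} (G : SimpleGraph (Fin k)) :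
    Nat.card (G →g X₂) ≤ Nat.card (G →g X₁) := by
  classical
  have hfin : Finite (G →g X₁) :=
    Finite.of_injective (fun φ => (φ : Fin k → Fin 1 ⊕ Fin 3)) DFunLike.coe_injective
  have Finj : Function.Injective (Fm G) := by
    intro φ φ' h
    ext v
    have hv : Fm G φ v = Fm G φ' v := by rw [h]
    rw [Fm_apply, Fm_apply] at hv
    by_cases hiso : ∃ w, G.Adj v w
    · rw [if_pos hiso, if_pos hiso] at hv
      rcases fmap_cases _ _ hv with h1 | ⟨h1, h2⟩ | ⟨h1, h2⟩
      · exact h1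
      · obtain ⟨w, hvw⟩ := hiso
        have e1 : φ w = .inl 0 := adj_inl1 _ (h1 ▸ φ.map_rel hvw)
        have e2 : φ' w = .inr 0 := adj_inr1 _ (h2 ▸ φ'.map_rel hvw)
        have hw : Fm G φ w = Fm G φ' w := by rw [h]
        rw [Fm_apply, Fm_apply, if_pos ⟨v, hvw.symm⟩, if_pos ⟨v, hvw.symm⟩, e1, e2] at hw
        exact absurd hw (by decide)
      · obtain ⟨w, hvw⟩ := hiso
        have e1 : φ w = .inr 0 := adj_inr1 _ (h1 ▸ φ.map_rel hvw)
        have e2 : φ' w = .inl 0 := adj_inl1 _ (h2 ▸ φ'.map_rel hvw)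
        have hw : Fm G φ w = Fm G φ' w := by rw [h]
        rw [Fm_apply, Fm_apply, if_pos ⟨v, hvw.symm⟩, if_pos ⟨v, hvw.symm⟩, e1, e2] at hw
        exact absurd hw (by decide)
    · rw [if_neg hiso, if_neg hiso] at hv
      exact gmap_inj hv
  exact Nat.card_le_card_of_injective (Fm G) Finj
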